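/- arXiv:1112.3619 — 7 statements merged into one kernel-verified Lean document; each statement's English description precedes it below -/
import Mathlib

section
/- Let k be a commutative ring, n ≥ 1, and let ∂_1,…,∂_{n−1} be the Demazure operators on P_n = k[X_1,…,X_n]. Then ∂_i² = 0 for all i, ∂_i∂_j = ∂_j∂_i whenever |i−j| > 1, and ∂_i∂_{i+1}∂_i = ∂_{i+1}∂_i∂_{i+1} for 1 ≤ i ≤ n−2. -/
/-!
If `d * ∂ P = P - s P` with `s` an involutive ring endomorphism and `s d = -d`, then `s` fixes
the image of `∂` (cancel `d` in `d * s (∂ P) = -s (d * ∂ P)`), whence `∂ ∘ ∂ = 0`. Multiplying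
a word in two such operators by the product of the divisors involved turns it into an
alternating sum of permuted copies of `P`: `e d ∂ (∂' P) = P - t P - s P + s t P`, and
`(d + e) e d ∂ (∂' (∂ P))` is the alternating sum of `w P` over the six words `w` in `s, t`.
These sums are symmetric in the two operators once `s t = t s`, resp. `s t s = t s t`, so the
relations follow after cancelling the divisors; for polynomials these are differences of
variables, which are nonzerodivisors because `X u - X v` is monic in `X u`.
-/

open MvPolynomial
open scoped nonZeroDivisors

def IsDividedDifference {A F : Type*} [CommRing A] [FunLike F A A] (s : F) (d : A)
    (D : A → A) : Prop :=
  ∀ P, d * D P = P - s P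

namespace IsDividedDifference

variable {A F : Type*} [CommRing A] [FunLike F A A] [RingHomClass F A A]
  {s t : F} {d e : A} {D E : A → A}

theorem map_apply (hD : IsDividedDifference s d D) (hd : d ∈ A⁰) (hs : Function.Involutive s)
    (hsd : s d = -d) (P : A) : s (D P) = D P := by
  refine (mul_cancel_left_mem_nonZeroDivisors hd).mp ?_
  calc d * s (D P) = -s (d * D P) := by rw [map_mul, hsd]; ring
    _ = d * D P := by rw [hD, map_sub, hs]; ring

theorem apply_apply_eq_zero (hD : IsDividedDifference s d D) (hd : d ∈ A⁰)
    (hs : Function.Involutive s) (hsd : s d = -d) (P : A) : D (D P) = 0 := by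
  refine (mul_cancel_left_mem_nonZeroDivisors hd).mp ?_
  rw [hD, hD.map_apply hd hs hsd, sub_self, mul_zero]

theorem mul_mul_apply_apply (hD : IsDividedDifference s d D) (hE : IsDividedDifference t e E)
    (hse : s e = e) (P : A) : e * d * D (E P) = P - t P - s P + s (t P) := by
  have hsE : e * s (E P) = s (P - t P) := by rw [← hE, map_mul, hse]
  rw [mul_assoc, hD, mul_sub, hE, hsE, map_sub]
  ring

theorem apply_apply_comm (hD : IsDividedDifference s d D) (hE : IsDividedDifference t e E)
    (hd : d ∈ A⁰) (he : e ∈ A⁰) (hse : s e = e) (htd : t d = d)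
    (hst : ∀ a, s (t a) = t (s a)) (P : A) : D (E P) = E (D P) := by
  refine (mul_cancel_left_mem_nonZeroDivisors (Submonoid.mul_mem _ he hd)).mp ?_
  rw [hD.mul_mul_apply_apply hE hse, mul_comm e d, hE.mul_mul_apply_apply hD htd, hst]
  ring

theorem mul_mul_mul_apply_apply_apply (hD : IsDividedDifference s d D)
    (hE : IsDividedDifference t e E) (hd : d ∈ A⁰) (hs : Function.Involutive s) (hsd : s d = -d)
    (hse : s e = d + e) (htd : t d = d + e) (P : A) :
    (d + e) * e * d * D (E (D P)) = P - s P - t P + s (t P) + t (s P) - s (t (s P)) := by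
  have hsQ := hD.map_apply hd hs hsd P
  have hsf : s (d + e) = e := by rw [map_add, hsd, hse]; ring
  have h1 : (d + e) * s (E (D P)) = D P - s (t (D P)) := by
    rw [← hse, ← map_mul, hE, map_sub, hsQ]
  have h2 : (d + e) * t (D P) = t P - t (s P) := by rw [← htd, ← map_mul, hD, map_sub]
  have h3 : e * s (t (D P)) = s (t P) - s (t (s P)) := by
    rw [← hsf, ← map_mul, h2, map_sub]
  calc (d + e) * e * d * D (E (D P))
      = (d + e) * (e * E (D P)) - e * ((d + e) * s (E (D P))) := by rw [mul_assoc _ d, hD]; ring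
    _ = d * D P - (d + e) * t (D P) + e * s (t (D P)) := by rw [hE, h1]; ring
    _ = P - s P - t P + s (t P) + t (s P) - s (t (s P)) := by rw [hD, h2, h3]; ring

theorem braid (hD : IsDividedDifference s d D) (hE : IsDividedDifference t e E)
    (hd : d ∈ A⁰) (he : e ∈ A⁰) (hde : d + e ∈ A⁰) (hs : Function.Involutive s)
    (ht : Function.Involutive t) (hsd : s d = -d) (hte : t e = -e) (hse : s e = d + e)
    (htd : t d = d + e) (hsts : ∀ a, s (t (s a)) = t (s (t a))) (P : A) :
    D (E (D P)) = E (D (E P)) := by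
  have hEDE := hE.mul_mul_mul_apply_apply_apply hD he ht hte (by rw [htd, add_comm])
    (by rw [hse, add_comm]) P
  refine (mul_cancel_left_mem_nonZeroDivisors (mul_mem (mul_mem hde he) hd)).mp ?_
  rw [hD.mul_mul_mul_apply_apply_apply hE hd hs hsd hse htd, mul_right_comm _ e d, add_comm d e,
    hEDE, hsts]
  ring

end IsDividedDifference

namespace MvPolynomial

variable {ι k : Type*} [CommRing k]

theorem X_sub_X_mem_nonZeroDivisors {u v : ι} (h : u ≠ v) :
    (X u - X v : MvPolynomial ι k) ∈ (MvPolynomial ι k)⁰ := by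
  classical
  let φ := (renameEquiv k (Equiv.optionSubtypeNe u).symm).trans (optionEquivLeft k {b // b ≠ u})
  refine mem_nonZeroDivisors_of_injective (f := φ) φ.injective ?_
  have hφ : φ (X u - X v) = Polynomial.X - Polynomial.C (X ⟨v, h.symm⟩) := by
    simp [φ, Equiv.optionSubtypeNe_symm_of_ne h.symm, optionEquivLeft_X_some,
      optionEquivLeft_X_none]
  rw [hφ]
  exact (Polynomial.monic_X_sub_C _).mem_nonZeroDivisors

variable [DecidableEq ι] {u v w z : ι} {D E : MvPolynomial ι k → MvPolynomial ι k}

theorem rename_swap_involutive (u v : ι) :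
    Function.Involutive (rename (R := k) (Equiv.swap u v)) := fun P => by
  rw [rename_rename, ← Equiv.Perm.coe_mul, Equiv.swap_mul_self, Equiv.Perm.coe_one,
    rename_id_apply]

theorem rename_swap_X_sub_X (u v : ι) :
    rename (Equiv.swap u v) (X v - X u : MvPolynomial ι k) = -(X v - X u) := by
  simp

theorem demazure_apply_apply_eq_zero
    (hD : IsDividedDifference (rename (Equiv.swap u v)) (X v - X u) D)
    (huv : u ≠ v) (P : MvPolynomial ι k) : D (D P) = 0 :=
  hD.apply_apply_eq_zero (X_sub_X_mem_nonZeroDivisors huv.symm) (rename_swap_involutive u v)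
    (rename_swap_X_sub_X u v) P

theorem demazure_comm (hD : IsDividedDifference (rename (Equiv.swap u v)) (X v - X u) D)
    (hE : IsDividedDifference (rename (Equiv.swap w z)) (X z - X w) E)
    (huv : u ≠ v) (hwz : w ≠ z) (huw : u ≠ w) (huz : u ≠ z) (hvw : v ≠ w) (hvz : v ≠ z)
    (P : MvPolynomial ι k) : D (E P) = E (D P) := by
  have hst : Commute (Equiv.swap u v) (Equiv.swap w z) :=
    (Equiv.Perm.disjoint_swap_swap (by simp [*])).commute
  refine hD.apply_apply_comm hE (X_sub_X_mem_nonZeroDivisors huv.symm)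
    (X_sub_X_mem_nonZeroDivisors hwz.symm) ?_ ?_ (fun Q => ?_) P
  · simp [Equiv.swap_apply_of_ne_of_ne huw.symm hvw.symm,
      Equiv.swap_apply_of_ne_of_ne huz.symm hvz.symm]
  · simp [Equiv.swap_apply_of_ne_of_ne huw huz, Equiv.swap_apply_of_ne_of_ne hvw hvz]
  · rw [rename_rename, rename_rename, ← Equiv.Perm.coe_mul, ← Equiv.Perm.coe_mul, hst.eq]

theorem demazure_braid (hD : IsDividedDifference (rename (Equiv.swap u v)) (X v - X u) D)
    (hE : IsDividedDifference (rename (Equiv.swap v w)) (X w - X v) E)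
    (huv : u ≠ v) (hvw : v ≠ w) (huw : u ≠ w) (P : MvPolynomial ι k) :
    D (E (D P)) = E (D (E P)) := by
  have hsts : Equiv.swap u v * Equiv.swap v w * Equiv.swap u v =
      Equiv.swap v w * Equiv.swap u v * Equiv.swap v w := by
    rw [Equiv.swap_mul_swap_mul_swap huv huw, Equiv.swap_comm u v, Equiv.swap_comm v w,
      Equiv.swap_mul_swap_mul_swap hvw.symm huw.symm, Equiv.swap_comm]
  refine hD.braid hE (X_sub_X_mem_nonZeroDivisors huv.symm)
    (X_sub_X_mem_nonZeroDivisors hvw.symm) ?_ (rename_swap_involutive u v)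
    (rename_swap_involutive v w) (rename_swap_X_sub_X u v) (rename_swap_X_sub_X v w) ?_ ?_
    (fun Q => ?_) P
  · simpa using X_sub_X_mem_nonZeroDivisors (k := k) huw.symm
  · simp [Equiv.swap_apply_of_ne_of_ne huw.symm hvw.symm]
  · simp [Equiv.swap_apply_of_ne_of_ne huv huw]
  · simp only [rename_rename, ← Equiv.Perm.coe_mul, ← mul_assoc, hsts]

end MvPolynomial

/-- The Demazure operators `∂_i` on `k[X_1, …, X_{n+1}]` — the unique `k`-linear maps
satisfying `(X_{i+1} − X_i) ∂_i(P) = P − s_i(P)` — satisfy `∂_i² = 0`,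
`∂_i ∂_j = ∂_j ∂_i` for `|i − j| > 1`, and the braid relations
`∂_i ∂_{i+1} ∂_i = ∂_{i+1} ∂_i ∂_{i+1}`. -/
theorem demazure_braid_relations (k : Type*) [CommRing k] (n : ℕ)
    (D : Fin n → MvPolynomial (Fin (n + 1)) k →ₗ[k] MvPolynomial (Fin (n + 1)) k)
    (hD : ∀ (i : Fin n) (P : MvPolynomial (Fin (n + 1)) k),
      (X i.succ - X i.castSucc) * D i P =
        P - rename (Equiv.swap i.castSucc i.succ) P) :
    (∀ i : Fin n, (D i) ∘ₗ (D i) = 0) ∧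
    (∀ i j : Fin n, (i : ℕ) + 1 < (j : ℕ) ∨ (j : ℕ) + 1 < (i : ℕ) →
      (D i) ∘ₗ (D j) = (D j) ∘ₗ (D i)) ∧
    (∀ i j : Fin n, (j : ℕ) = (i : ℕ) + 1 →
      (D i) ∘ₗ (D j) ∘ₗ (D i) = (D j) ∘ₗ (D i) ∘ₗ (D j)) := by
  refine ⟨fun i => LinearMap.ext fun P => ?_, fun i j hij => LinearMap.ext fun P => ?_,
    fun i j hij => LinearMap.ext fun P => ?_⟩
  · exact demazure_apply_apply_eq_zero (hD i) (Fin.castSucc_lt_succ (i := i)).ne P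
  · refine demazure_comm (hD i) (hD j) (Fin.castSucc_lt_succ (i := i)).ne
      (Fin.castSucc_lt_succ (i := j)).ne ?_ ?_ ?_ ?_ P <;>
      simp only [ne_eq, Fin.ext_iff, Fin.val_castSucc, Fin.val_succ] <;> omega
  · have hj : j.castSucc = i.succ := Fin.ext (by simp [hij])
    refine demazure_braid (hD i) (hj ▸ hD j) (Fin.castSucc_lt_succ (i := i)).ne
      (hj ▸ (Fin.castSucc_lt_succ (i := j)).ne) ?_ P
    simp only [ne_eq, Fin.ext_iff, Fin.val_castSucc, Fin.val_succ]
    omega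
end

section
/- Let k be a commutative ring and n ≥ 1. A polynomial P ∈ P_n = k[X_1,…,X_n] satisfies ∂_i(P) = 0 for all 1 ≤ i ≤ n−1 if and only if P is a symmetric polynomial, i.e., P is invariant under the action of every permutation in S_n. -/
/-!
Since `X_{i+1} - X_i` is a non-zero-divisor, `∂_i P = 0` exactly when `P` is fixed by the
adjacent transposition `s_i`; and the adjacent transpositions generate `S_n` as a monoid.
-/

open MvPolynomial
open scoped nonZeroDivisors

namespace MvPolynomial

/-- Make `a` the variable of a one-variable polynomial ring; `X a - X b` becomes monic. -/
theorem X_sub_X_mem_nonZeroDivisors_s7 {σ R : Type*} [CommRing R] [DecidableEq σ] {a b : σ} (hab : a ≠ b) :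
    (X a - X b : MvPolynomial σ R) ∈ (MvPolynomial σ R)⁰ := by
  let φ := (renameEquiv R (Equiv.optionSubtypeNe a).symm).trans
    (optionEquivLeft R {c // c ≠ a})
  have hφ : φ (X a - X b) = Polynomial.X - Polynomial.C (X ⟨b, hab.symm⟩) := by
    simp [φ, Equiv.optionSubtypeNe_symm_of_ne hab.symm, optionEquivLeft_X_some,
      optionEquivLeft_X_none]
  rw [← φ.symm_apply_apply (X a - X b), hφ, ← MulEquivClass.map_nonZeroDivisors φ.symm]
  exact Submonoid.mem_map_of_mem _ (Polynomial.monic_X_sub_C _).mem_nonZeroDivisors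

theorem isSymmetric_iff_forall_rename_swap_castSucc_succ {R : Type*} [CommSemiring R] {n : ℕ}
    {P : MvPolynomial (Fin (n + 1)) R} :
    P.IsSymmetric ↔ ∀ i : Fin n, rename (Equiv.swap i.castSucc i.succ) P = P := by
  refine ⟨fun hP i ↦ hP _, fun hswap e ↦ ?_⟩
  have he : e ∈ Submonoid.closure (Set.range fun i : Fin n ↦ Equiv.swap i.castSucc i.succ) := by
    rw [Equiv.Perm.mclosure_swap_castSucc_succ]; trivial
  induction he using Submonoid.closure_induction with
  | mem _ hx => obtain ⟨i, rfl⟩ := hx; exact hswap i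
  | one => exact rename_id_apply P
  | mul x y _ _ hx hy => rw [Equiv.Perm.coe_mul, ← rename_rename, hy, hx]

end MvPolynomial

/-- A polynomial `P ∈ k[X_1, …, X_{n+1}]` is killed by all the Demazure operators `∂_i`
if and only if `P` is a symmetric polynomial. -/
theorem demazure_kernel_eq_symmetric (k : Type*) [CommRing k] (n : ℕ)
    (D : Fin n → MvPolynomial (Fin (n + 1)) k →ₗ[k] MvPolynomial (Fin (n + 1)) k)
    (hD : ∀ (i : Fin n) (P : MvPolynomial (Fin (n + 1)) k),
      (X i.succ - X i.castSucc) * D i P =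
        P - rename (Equiv.swap i.castSucc i.succ) P)
    (P : MvPolynomial (Fin (n + 1)) k) :
    (∀ i : Fin n, D i P = 0) ↔ P.IsSymmetric := by
  have hker : ∀ i, D i P = 0 ↔ rename (Equiv.swap i.castSucc i.succ) P = P := fun i ↦ by
    rw [← mul_left_mem_nonZeroDivisors_eq_zero_iff
      (X_sub_X_mem_nonZeroDivisors_s7 (Fin.castSucc_lt_succ (i := i)).ne'), hD, sub_eq_zero, eq_comm]
  simp only [hker, isSymmetric_iff_forall_rename_swap_castSucc_succ]
end

section
/- Let n ≥ 1 and consider the Demazure operators ∂_i on P_n = ℤ[X_1,…,X_n]. Let w0 = (s_1 s_2 ⋯ s_{n−1})(s_1 s_2 ⋯ s_{n−2}) ⋯ (s_1 s_2) s_1 be the reduced expression of the longest element of S_n, and let ∂_{w0} be the corresponding composite of Demazure operators. Then ∂_{w0}(X_2 X_3² ⋯ X_n^{n−1}) = 1, where X_2 X_3² ⋯ X_n^{n−1} = ∏_{i=2}^{n} X_i^{i−1} is the staircase monomial. -/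
/-!
Index the variables from `0` and write `T_m = ∏_{m ≤ i ≤ n} X_i^i`, so that the staircase is
`T_0 = T_1`, and let `h_k` be the complete homogeneous symmetric polynomials. Since
`T_{m+2}` is symmetric in `X_0, …, X_{m+1}`, each `∂_j` with `j ≤ m` passes through it, and
`∂_j h_{j+1}(X_{j+1}, …, X_{m+1}) = h_j(X_j, …, X_{m+1})` by the identity
`(a - b) h_k(a, b, l) = h_{k+1}(a, l) - h_{k+1}(b, l)`. Hence the block `∂_0 ⋯ ∂_m` sends
`T_{m+1} = X_{m+1}^{m+1} T_{m+2}` to `h_0 T_{m+2} = T_{m+2}`, and the blocks of `w0`, applied for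
`m = 0, 1, …, n - 1`, carry the staircase down to `T_{n+1} = 1`.
-/

open MvPolynomial

/-- The word `(s_1 s_2 ⋯ s_n)(s_1 s_2 ⋯ s_{n-1}) ⋯ (s_1 s_2) s_1` (in 0-indexed form:
the concatenation of the blocks `[0, …, m]` for `m = n-1, n-2, …, 0`),
a reduced expression of the longest element of `S_{n+1}`. -/
def longestWord (n : ℕ) : List (Fin n) :=
  (List.finRange n).reverse.flatMap fun m => (List.finRange n).filter (· ≤ m)

open Fin.NatCast

section CompleteHomog

variable {R : Type*} [CommRing R]

/-- `h_k(l)`, the sum of all monomials of degree `k` in the entries of `l`. -/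
def completeHomog : ℕ → List R → R
  | 0, _ => 1
  | _ + 1, [] => 0
  | k + 1, a :: l => a * completeHomog k (a :: l) + completeHomog (k + 1) l

@[simp]
theorem completeHomog_zero (l : List R) : completeHomog 0 l = 1 := by
  rw [completeHomog]

@[simp]
theorem completeHomog_succ_nil (k : ℕ) : completeHomog (k + 1) ([] : List R) = 0 := by
  rw [completeHomog]

theorem completeHomog_succ_cons (k : ℕ) (a : R) (l : List R) :
    completeHomog (k + 1) (a :: l) = a * completeHomog k (a :: l) + completeHomog (k + 1) l := by
  rw [completeHomog]

theorem completeHomog_singleton (k : ℕ) (a : R) : completeHomog k [a] = a ^ k := by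
  induction k with
  | zero => simp
  | succ k ih => rw [completeHomog_succ_cons, ih, completeHomog_succ_nil, add_zero, pow_succ']

theorem sub_mul_completeHomog_cons_cons (a b : R) (l : List R) (k : ℕ) :
    (a - b) * completeHomog k (a :: b :: l) =
      completeHomog (k + 1) (a :: l) - completeHomog (k + 1) (b :: l) := by
  induction k with
  | zero => simp only [completeHomog_succ_cons, completeHomog_zero]; ring
  | succ k ih =>
    rw [completeHomog_succ_cons k a (b :: l), completeHomog_succ_cons (k + 1) a l,
      completeHomog_succ_cons (k + 1) b l]
    linear_combination a * ih

theorem map_completeHomog {S F : Type*} [CommRing S] [FunLike F R S] [RingHomClass F R S]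
    (f : F) : ∀ (k : ℕ) (l : List R), f (completeHomog k l) = completeHomog k (l.map f)
  | 0, _ => by simp
  | k + 1, [] => by simp
  | k + 1, a :: l => by
    rw [completeHomog_succ_cons, map_add, map_mul, map_completeHomog f k (a :: l),
      map_completeHomog f (k + 1) l, List.map_cons, completeHomog_succ_cons]

end CompleteHomog

section Demazure

variable {σ R : Type*} [DecidableEq σ] [CommRing R]

def IsDemazureOperator (a b : σ) (D : MvPolynomial σ R → MvPolynomial σ R) : Prop :=
  ∀ P, (X b - X a) * D P = P - rename (Equiv.swap a b) P

namespace IsDemazureOperator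

variable [IsDomain R] {a b : σ} {D : MvPolynomial σ R → MvPolynomial σ R}

theorem apply_eq (hD : IsDemazureOperator a b D) (hab : a ≠ b) {P Q : MvPolynomial σ R}
    (h : (X b - X a) * Q = P - rename (Equiv.swap a b) P) : D P = Q :=
  mul_left_cancel₀ (sub_ne_zero.mpr fun h' => hab (X_injective h').symm) ((hD P).trans h.symm)

theorem apply_mul_of_rename_eq (hD : IsDemazureOperator a b D) (hab : a ≠ b)
    (P : MvPolynomial σ R) {T : MvPolynomial σ R} (hT : rename (Equiv.swap a b) T = T) :
    D (P * T) = D P * T :=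
  hD.apply_eq hab <| by rw [← mul_assoc, hD P, map_mul, hT, sub_mul]

theorem apply_completeHomog (hD : IsDemazureOperator a b D) (hab : a ≠ b)
    {L : List (MvPolynomial σ R)} (hL : L.map (rename (Equiv.swap a b)) = L) (k : ℕ) :
    D (completeHomog (k + 1) (X b :: L)) = completeHomog k (X a :: X b :: L) := by
  refine hD.apply_eq hab ?_
  rw [map_completeHomog, List.map_cons, hL, rename_X, Equiv.swap_apply_right]
  linear_combination (-1 : MvPolynomial σ R) * sub_mul_completeHomog_cons_cons (X a) (X b) L k

end IsDemazureOperator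

end Demazure

theorem Fin.natCast_ne_natCast_add_one {n j : ℕ} (hj : j < n) :
    (j : Fin (n + 1)) ≠ ((j + 1 : ℕ) : Fin (n + 1)) := by
  rw [Ne, Fin.ext_iff, Fin.val_cast_of_lt (by omega), Fin.val_cast_of_lt (by omega)]
  omega

section Staircase

variable {R : Type*} [CommRing R] {n : ℕ}

theorem rename_swap_X_natCast {u v : Fin (n + 1)} {i : ℕ} (hi : i ≤ n) (hu : (u : ℕ) < i)
    (hv : (v : ℕ) < i) :
    rename (Equiv.swap u v) (X (i : Fin (n + 1)) : MvPolynomial (Fin (n + 1)) R) =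
      X (i : Fin (n + 1)) := by
  have hival : ((i : Fin (n + 1)) : ℕ) = i := Fin.val_cast_of_lt (Nat.lt_succ_of_le hi)
  rw [rename_X, Equiv.swap_apply_of_ne_of_ne]
  · exact ne_of_gt (by rw [Fin.lt_def, hival]; exact hu)
  · exact ne_of_gt (by rw [Fin.lt_def, hival]; exact hv)

theorem map_rename_swap_range' {u v : Fin (n + 1)} {j d : ℕ} (hjd : j + d ≤ n + 1)
    (hu : (u : ℕ) < j) (hv : (v : ℕ) < j) :
    ((List.range' j d).map fun i : ℕ => (X (i : Fin (n + 1)) : MvPolynomial (Fin (n + 1)) R)).map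
      (rename (Equiv.swap u v)) = (List.range' j d).map fun i : ℕ => X (i : Fin (n + 1)) := by
  rw [List.map_map]
  refine List.map_congr_left fun i hi => ?_
  rw [List.mem_range'_1] at hi
  exact rename_swap_X_natCast (by omega) (by omega) (by omega)

variable (R n) in
noncomputable def staircaseFrom (m : ℕ) : MvPolynomial (Fin (n + 1)) R :=
  ∏ i ∈ Finset.Ico m (n + 1), X (i : Fin (n + 1)) ^ i

theorem staircaseFrom_zero : staircaseFrom R n 0 = ∏ i : Fin (n + 1), X i ^ (i : ℕ) := by
  rw [staircaseFrom, ← Finset.range_eq_Ico,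
    ← Fin.prod_univ_eq_prod_range fun i => (X (i : Fin (n + 1)) : MvPolynomial _ R) ^ i]
  simp only [Fin.cast_val_eq_self]

@[simp]
theorem staircaseFrom_succ_self : staircaseFrom R n (n + 1) = 1 := by
  simp [staircaseFrom]

theorem staircaseFrom_eq_mul {m : ℕ} (hm : m ≤ n) :
    staircaseFrom R n m = X (m : Fin (n + 1)) ^ m * staircaseFrom R n (m + 1) :=
  Finset.prod_eq_prod_Ico_succ_bot (Nat.lt_succ_of_le hm) _

theorem staircaseFrom_one : staircaseFrom R n 1 = staircaseFrom R n 0 := by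
  rw [staircaseFrom_eq_mul (Nat.zero_le n), pow_zero, one_mul]

theorem rename_swap_staircaseFrom {u v : Fin (n + 1)} {m : ℕ} (hu : (u : ℕ) < m)
    (hv : (v : ℕ) < m) : rename (Equiv.swap u v) (staircaseFrom R n m) = staircaseFrom R n m := by
  rw [staircaseFrom, map_prod]
  refine Finset.prod_congr rfl fun i hi => ?_
  rw [Finset.mem_Ico] at hi
  rw [map_pow, rename_swap_X_natCast (by omega) (by omega) (by omega)]

end Staircase

section LongestWord

variable {R : Type*} [CommRing R] [IsDomain R] {n : ℕ}
  {D : ℕ → MvPolynomial (Fin (n + 1)) R → MvPolynomial (Fin (n + 1)) R}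

theorem foldr_demazure_range'
    (hD : ∀ j < n, IsDemazureOperator (j : Fin (n + 1)) ((j + 1 : ℕ) : Fin (n + 1)) (D j)) :
    ∀ d j, j + d ≤ n →
      (List.range' j d).foldr D
          (X ((j + d : ℕ) : Fin (n + 1)) ^ (j + d) * staircaseFrom R n (j + d + 1)) =
        completeHomog j ((List.range' j (d + 1)).map fun i : ℕ => X (i : Fin (n + 1))) *
          staircaseFrom R n (j + d + 1)
  | 0, j, _ => by simp [completeHomog_singleton]
  | d + 1, j, hjd => by
    have hj : j < n := by omega
    have hne := Fin.natCast_ne_natCast_add_one hj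
    have hj₀ : ((j : Fin (n + 1)) : ℕ) = j := Fin.val_cast_of_lt (by omega)
    have hj₁ : (((j + 1 : ℕ) : Fin (n + 1)) : ℕ) = j + 1 := Fin.val_cast_of_lt (by omega)
    rw [List.range'_succ, List.foldr_cons, show j + (d + 1) = j + 1 + d by omega,
      foldr_demazure_range' hD d (j + 1) (by omega), List.range'_succ, List.range'_succ,
      List.range'_succ, List.map_cons, List.map_cons, List.map_cons,
      (hD j hj).apply_mul_of_rename_eq hne _
        (rename_swap_staircaseFrom (by omega) (by omega)),
      (hD j hj).apply_completeHomog hne (map_rename_swap_range' (by omega) (by omega) (by omega))]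

theorem foldr_demazure_staircaseFrom
    (hD : ∀ j < n, IsDemazureOperator (j : Fin (n + 1)) ((j + 1 : ℕ) : Fin (n + 1)) (D j)) :
    ∀ M ≤ n, ((List.range M).reverse.flatMap fun m => List.range (m + 1)).foldr D
      (staircaseFrom R n 0) = staircaseFrom R n (M + 1)
  | 0, _ => by simp [staircaseFrom_one]
  | M + 1, hM => by
    rw [List.range_succ, List.reverse_append, List.reverse_singleton, List.singleton_append,
      List.flatMap_cons, List.foldr_append, foldr_demazure_staircaseFrom hD M (by omega),
      staircaseFrom_eq_mul hM, List.range_eq_range']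
    simpa using foldr_demazure_range' hD (M + 1) 0 (by omega)

end LongestWord

theorem List.filter_range_le {n m : ℕ} (h : m < n) :
    (List.range n).filter (· ≤ m) = List.range (m + 1) := by
  obtain ⟨k, rfl⟩ := Nat.exists_eq_add_of_lt h
  rw [show m + k + 1 = m + 1 + k by omega, List.range_add, List.filter_append,
    List.filter_eq_self.mpr, List.filter_eq_nil_iff.mpr, List.append_nil]
  · intro a ha
    obtain ⟨b, -, rfl⟩ := List.mem_map.mp ha
    simp only [decide_eq_true_eq]
    omega
  · intro a ha
    simpa [Nat.lt_succ_iff] using ha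

theorem longestWord_map_val (n : ℕ) :
    (longestWord n).map Fin.val = (List.range n).reverse.flatMap fun m => List.range (m + 1) := by
  rw [longestWord, List.map_flatMap, ← List.map_coe_finRange_eq_range, ← List.map_reverse,
    List.flatMap_map]
  congr 1
  funext m
  rw [← List.filter_range_le m.isLt, ← List.map_coe_finRange_eq_range, List.filter_map]
  rfl

/-- Applying the composite Demazure operator `∂_{w0}` corresponding to the reduced
expression `(s_1 ⋯ s_n)(s_1 ⋯ s_{n-1}) ⋯ s_1` of the longest element of `S_{n+1}`
to the staircase monomial `X_2 X_3² ⋯ X_{n+1}^n` yields `1`. -/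
theorem demazure_longest_on_staircase (n : ℕ)
    (D : Fin n → MvPolynomial (Fin (n + 1)) ℤ →ₗ[ℤ] MvPolynomial (Fin (n + 1)) ℤ)
    (hD : ∀ (i : Fin n) (P : MvPolynomial (Fin (n + 1)) ℤ),
      (X i.succ - X i.castSucc) * D i P =
        P - rename (Equiv.swap i.castSucc i.succ) P) :
    (longestWord n).foldr (fun i P => D i P)
      (∏ i : Fin (n + 1), X i ^ (i : ℕ)) = 1 := by
  let D' : ℕ → MvPolynomial (Fin (n + 1)) ℤ → MvPolynomial (Fin (n + 1)) ℤ :=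
    fun j => if h : j < n then D ⟨j, h⟩ else id
  have hD' : ∀ j < n,
      IsDemazureOperator (j : Fin (n + 1)) ((j + 1 : ℕ) : Fin (n + 1)) (D' j) := by
    intro j hj P
    have hcast : (⟨j, hj⟩ : Fin n).castSucc = (j : Fin (n + 1)) :=
      Fin.ext (Fin.val_cast_of_lt (by omega)).symm
    have hsucc : (⟨j, hj⟩ : Fin n).succ = ((j + 1 : ℕ) : Fin (n + 1)) :=
      Fin.ext (Fin.val_cast_of_lt (by omega)).symm
    simpa only [D', dif_pos hj, hcast, hsucc] using hD ⟨j, hj⟩ P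
  have hfold : ∀ P, (longestWord n).foldr (fun i P => D i P) P =
      ((longestWord n).map Fin.val).foldr D' P := by
    intro P
    simp only [List.foldr_map, D', Fin.is_lt, dif_pos]
  rw [hfold, longestWord_map_val, ← staircaseFrom_zero,
    foldr_demazure_staircaseFrom hD' n le_rfl, staircaseFrom_succ_self]
end

section
/- Let R be a commutative ring and f : M → N an R-linear map between free R-modules of the same finite rank. If for every maximal ideal 𝔪 of R the induced map f ⊗ R/𝔪 : M/𝔪M → N/𝔪N is injective, then f is an isomorphism. -/
/-!
Let `A` be the matrix of `f` in the given bases. Reducing modulo a maximal ideal `𝔪` gives the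
matrix of `f ⊗ R/𝔪`, an injective map between vector spaces of the same dimension, hence an
isomorphism; so `det A` lies in no maximal ideal, i.e. it is a unit, and `f` is invertible.
-/

open Module

theorem isUnit_of_forall_isMaximal_isUnit_mk {R : Type*} [CommRing R] {a : R}
    (h : ∀ m : Ideal R, m.IsMaximal → IsUnit (Ideal.Quotient.mk m a)) : IsUnit a := by
  by_contra ha
  obtain ⟨m, hm, ham⟩ := exists_max_ideal_of_mem_nonunits ha
  have := h m hm
  rw [Ideal.Quotient.eq_zero_iff_mem.mpr ham] at this
  exact not_isUnit_zero this

theorem LinearMap.isUnit_det_toMatrix_of_injective {K V W ι : Type*} [Field K]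
    [AddCommGroup V] [AddCommGroup W] [Module K V] [Module K W] [Fintype ι] [DecidableEq ι]
    (bV : Basis ι K V) (bW : Basis ι K W) {f : V →ₗ[K] W} (hf : Function.Injective f) :
    IsUnit (toMatrix bV bW f).det := by
  have := Module.Finite.of_basis bV
  have := Module.Finite.of_basis bW
  have hdim : finrank K V = finrank K W := by
    rw [finrank_eq_card_basis bV, finrank_eq_card_basis bW]
  exact (f.linearEquivOfInjective hf hdim).isUnit_det bV bW

/-- If `f : M → N` is a morphism of free `R`-modules of the same finite rank such that
`f ⊗ R/𝔪` is injective for every maximal ideal `𝔪` of `R`, then `f` is an isomorphism. -/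
theorem bijective_of_injective_mod_all_maximal_ideals
    (R : Type*) [CommRing R] (M N : Type*) [AddCommGroup M] [AddCommGroup N]
    [Module R M] [Module R N] (n : ℕ)
    (bM : Module.Basis (Fin n) R M) (bN : Module.Basis (Fin n) R N)
    (f : M →ₗ[R] N)
    (h : ∀ m : Ideal R, m.IsMaximal →
      Function.Injective (LinearMap.baseChange (R ⧸ m) f)) :
    Function.Bijective f := by
  have hdet : IsUnit (LinearMap.toMatrix bM bN f).det := by
    refine isUnit_of_forall_isMaximal_isUnit_mk fun m hm ↦ ?_
    let _ := Ideal.Quotient.field m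
    have hmod := LinearMap.isUnit_det_toMatrix_of_injective
      (Algebra.TensorProduct.basis (R ⧸ m) bM) (Algebra.TensorProduct.basis (R ⧸ m) bN) (h m hm)
    rwa [LinearMap.toMatrix_baseChange, ← RingHom.mapMatrix_apply, ← RingHom.map_det] at hmod
  exact (LinearEquiv.ofIsUnitDet hdet).bijective
end

section
/- Let n ≥ 1 and P_n = ℤ[X_1,…,X_n]. For each w ∈ S_n fix a reduced expression and let ∂_w be the corresponding composite of Demazure operators. If a family (P_w)_{w ∈ S_n} of elements of P_n satisfies ∑_{w ∈ S_n} P_w · ∂_w(Q) = 0 for all Q ∈ P_n, then P_w = 0 for every w. In other words, the operators (m_{P} ∘ ∂_w) realize the nil affine Hecke algebra faithfully: the family (∂_w)_{w∈S_n} of endomorphisms of P_n is linearly independent over P_n. -/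
/-!
Over the fraction field `K` of `P_n` the Demazure operator is `∂ᵢ = (X_{i+1} - X_i)⁻¹ (1 - sᵢ)`,
so a composite `∂_L` expands as `∑ᵤ c_L(u) · u` with coefficients `c_L(u) ∈ K`, and `c_L(u) ≠ 0`
only if `u` is the product of a subword of `L`. For a reduced word of `w` this gives
`c_L(w) ≠ 0` and `c_L(u) = 0` for every other `u` with at least as many inversions as `w`.
By Dedekind's independence of characters, `∑_w P_w ∂_w = 0` forces `∑_w P_w c_{l w}(u) = 0`
for every `u`, a triangular system whose only solution is `P = 0`.
-/

open MvPolynomial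

/-- The adjacent transposition `s i = (i, i+1)` in the symmetric group on `{1, …, n+1}`. -/
def adjTrans (n : ℕ) (i : Fin n) : Equiv.Perm (Fin (n + 1)) :=
  Equiv.swap i.castSucc i.succ

/-- The number of inversions of a permutation `w` of `{1, …, n+1}`. -/
def inversions (n : ℕ) (w : Equiv.Perm (Fin (n + 1))) : ℕ :=
  (Finset.univ.filter fun p : Fin (n + 1) × Fin (n + 1) => p.1 < p.2 ∧ w p.2 < w p.1).card

theorem linearIndependent_of_triangular {G R : Type*} [Fintype G] [Ring R] [NoZeroDivisors R]
    (ℓ : G → ℕ) {c : G → G → R} (hdiag : ∀ w, c w w ≠ 0)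
    (htri : ∀ w u, ℓ w ≤ ℓ u → u ≠ w → c w u = 0) : LinearIndependent R c := by
  classical
  rw [Fintype.linearIndependent_iff]
  intro g hg
  by_contra! hsupp
  obtain ⟨w₀, hw₀, hmax⟩ := (Finset.univ.filter (g · ≠ 0)).exists_max_image ℓ
    (by simpa [Finset.filter_nonempty_iff] using hsupp)
  have hcol : g w₀ * c w₀ w₀ = 0 := calc
    g w₀ * c w₀ w₀ = ∑ w : G, g w * c w w₀ := by
      symm
      refine Finset.sum_eq_single_of_mem w₀ (Finset.mem_univ _) fun w _ hw => ?_
      by_cases hgw : g w = 0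
      · simp [hgw]
      · simp [htri w w₀ (hmax w (by simpa using hgw)) hw.symm]
    _ = 0 := by simpa using congrFun hg w₀
  exact (mul_ne_zero (by simpa using hw₀) (hdiag w₀)) hcol

section DivDiff

variable {G K ι : Type*} [Group G] [Field K] [MulSemiringAction G K] (s : ι → G) (α : ι → K)

def divDiff (i : ι) (x : K) : K := (α i)⁻¹ * (x - s i • x)

theorem length_prod_le {ℓ : G → ℕ} (hℓ₁ : ℓ 1 = 0) (hℓs : ∀ i g, ℓ (s i * g) ≤ ℓ g + 1)
    (L : List ι) : ℓ (L.map s).prod ≤ L.length := by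
  induction L with
  | nil => simp [hℓ₁]
  | cons i L ih => simpa using (hℓs i _).trans (Nat.add_le_add_right ih 1)

variable [DecidableEq G]

def divDiffCoeff : List ι → G → K
  | [], u => if u = 1 then 1 else 0
  | i :: L, u => (α i)⁻¹ * (divDiffCoeff L u - s i • divDiffCoeff L ((s i)⁻¹ * u))

theorem foldr_divDiff_eq_sum [Fintype G] (L : List ι) (x : K) :
    L.foldr (divDiff s α) x = ∑ u, divDiffCoeff s α L u * (u • x) := by
  induction L with
  | nil => simp [divDiffCoeff]
  | cons i L ih =>
    have hreindex : ∑ u, s i • divDiffCoeff s α L u * ((s i * u) • x) =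
        ∑ u, s i • divDiffCoeff s α L ((s i)⁻¹ * u) * (u • x) :=
      Fintype.sum_equiv (Equiv.mulLeft (s i)) _ _ (by simp)
    simp only [List.foldr_cons, ih, divDiff, divDiffCoeff, Finset.smul_sum, smul_mul',
      smul_smul, hreindex, ← Finset.sum_sub_distrib, Finset.mul_sum, ← sub_mul, mul_assoc]

variable {s α}

theorem exists_sublist_prod_eq_of_divDiffCoeff_ne_zero {L : List ι} {u : G}
    (h : divDiffCoeff s α L u ≠ 0) : ∃ L' : List ι, L'.Sublist L ∧ (L'.map s).prod = u := by
  induction L generalizing u with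
  | nil =>
    refine ⟨[], List.Sublist.slnil, ?_⟩
    by_contra hu
    exact h (if_neg (Ne.symm hu))
  | cons i L ih =>
    by_cases hu : divDiffCoeff s α L u = 0
    · have hsu : divDiffCoeff s α L ((s i)⁻¹ * u) ≠ 0 := fun h' => h (by
        simp [divDiffCoeff, hu, h'])
      obtain ⟨L', hL', hprod⟩ := ih hsu
      exact ⟨i :: L', hL'.cons_cons i, by simp [hprod]⟩
    · obtain ⟨L', hL', hprod⟩ := ih hu
      exact ⟨L', hL'.cons i, hprod⟩

variable {ℓ : G → ℕ}

theorem divDiffCoeff_eq_zero_of_le (hℓ₁ : ℓ 1 = 0) (hℓs : ∀ i g, ℓ (s i * g) ≤ ℓ g + 1)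
    {L : List ι} (hL : L.length = ℓ (L.map s).prod) {u : G}
    (hle : ℓ (L.map s).prod ≤ ℓ u) (hne : u ≠ (L.map s).prod) : divDiffCoeff s α L u = 0 := by
  by_contra h
  obtain ⟨L', hL', rfl⟩ := exists_sublist_prod_eq_of_divDiffCoeff_ne_zero h
  have hlen : L'.length = L.length :=
    le_antisymm hL'.length_le (hL ▸ hle.trans (length_prod_le s hℓ₁ hℓs L'))
  exact hne (by rw [hL'.eq_of_length hlen])

theorem divDiffCoeff_prod_ne_zero (hℓ₁ : ℓ 1 = 0) (hℓs : ∀ i g, ℓ (s i * g) ≤ ℓ g + 1)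
    (hα : ∀ i, α i ≠ 0) {L : List ι} (hL : L.length = ℓ (L.map s).prod) :
    divDiffCoeff s α L (L.map s).prod ≠ 0 := by
  induction L with
  | nil => simp [divDiffCoeff]
  | cons i L ih =>
    rw [List.map_cons, List.prod_cons, List.length_cons] at hL
    rw [List.map_cons, List.prod_cons]
    have hLw : L.length = ℓ (L.map s).prod :=
      le_antisymm (by have := hℓs i (L.map s).prod; omega) (length_prod_le s hℓ₁ hℓs L)
    have hzero : divDiffCoeff s α L (s i * (L.map s).prod) = 0 :=
      divDiffCoeff_eq_zero_of_le hℓ₁ hℓs hLw (by omega) (fun h => by rw [h] at hL; omega)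
    -- the first term vanishes, leaving `-(α i)⁻¹ * s i • divDiffCoeff s α L (L.map s).prod`
    simpa [divDiffCoeff, hzero, hα i, smul_eq_zero_iff_eq] using ih hLw

theorem linearIndependent_divDiffCoeff [Fintype G] (hℓ₁ : ℓ 1 = 0)
    (hℓs : ∀ i g, ℓ (s i * g) ≤ ℓ g + 1) (hα : ∀ i, α i ≠ 0) {l : G → List ι}
    (hl : ∀ w, ((l w).map s).prod = w ∧ (l w).length = ℓ w) :
    LinearIndependent K fun w => divDiffCoeff s α (l w) := by
  have hred : ∀ w, (l w).length = ℓ ((l w).map s).prod := fun w => by rw [(hl w).1, (hl w).2]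
  refine linearIndependent_of_triangular ℓ (fun w => ?_) (fun w u hle hne => ?_)
  · simpa only [(hl w).1] using divDiffCoeff_prod_ne_zero hℓ₁ hℓs hα (hred w)
  · exact divDiffCoeff_eq_zero_of_le hℓ₁ hℓs (hred w) (by rwa [(hl w).1]) (by rwa [(hl w).1])

end DivDiff

theorem lt_or_eq_of_adjTrans_lt {n : ℕ} (i : Fin n) {x y : Fin (n + 1)}
    (h : adjTrans n i y < adjTrans n i x) : y < x ∨ (x = i.castSucc ∧ y = i.succ) := by
  simp only [adjTrans, Equiv.swap_apply_def] at h
  split_ifs at h <;> simp only [Fin.lt_def, Fin.ext_iff, Fin.val_succ, Fin.val_castSucc] at * <;>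
    omega

theorem inversions_one (n : ℕ) : inversions n 1 = 0 := by
  rw [inversions, Finset.card_eq_zero, Finset.filter_eq_empty_iff]
  exact fun _ _ h => lt_asymm h.1 h.2

theorem inversions_adjTrans_mul_le (n : ℕ) (i : Fin n) (u : Equiv.Perm (Fin (n + 1))) :
    inversions n (adjTrans n i * u) ≤ inversions n u + 1 := by
  have hsub : (Finset.univ.filter fun p : Fin (n + 1) × Fin (n + 1) =>
        p.1 < p.2 ∧ (adjTrans n i * u) p.2 < (adjTrans n i * u) p.1) ⊆
      insert (u.symm i.castSucc, u.symm i.succ)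
        (Finset.univ.filter fun p : Fin (n + 1) × Fin (n + 1) => p.1 < p.2 ∧ u p.2 < u p.1) := by
    rintro ⟨x, y⟩ hxy
    obtain ⟨-, hlt, hinv⟩ := Finset.mem_filter.1 hxy
    rcases lt_or_eq_of_adjTrans_lt i hinv with h | ⟨hx, hy⟩
    · exact Finset.mem_insert_of_mem (Finset.mem_filter.2 ⟨Finset.mem_univ _, hlt, h⟩)
    · simp [← hx, ← hy]
  exact (Finset.card_le_card hsub).trans (Finset.card_insert_le _ _)

section PermAction

variable {σ R : Type*}

noncomputable instance [CommSemiring R] : MulSemiringAction (Equiv.Perm σ) (MvPolynomial σ R) where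
  smul w p := rename w p
  one_smul := rename_id_apply
  mul_smul v w p := (rename_rename w v p).symm
  smul_zero _ := map_zero _
  smul_add _ := map_add _
  smul_one _ := map_one _
  smul_mul _ := map_mul _

theorem MvPolynomial.perm_smul_eq_rename [CommSemiring R] (w : Equiv.Perm σ)
    (p : MvPolynomial σ R) : w • p = rename w p :=
  rfl

variable [CommRing R] [IsDomain R]

noncomputable instance : MulSemiringAction (Equiv.Perm σ) (FractionRing (MvPolynomial σ R)) :=
  IsFractionRing.mulSemiringAction _ (MvPolynomial σ R) _

theorem linearIndependent_perm_smul_algebraMap :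
    LinearIndependent (FractionRing (MvPolynomial σ R)) fun (w : Equiv.Perm σ)
      (p : MvPolynomial σ R) => w • algebraMap _ (FractionRing (MvPolynomial σ R)) p := by
  let χ (w : Equiv.Perm σ) : MvPolynomial σ R →* FractionRing (MvPolynomial σ R) :=
    ((MulSemiringAction.toRingHom _ _ w).comp (algebraMap _ _)).toMonoidHom
  have hχ : Function.Injective χ := fun v w h => Equiv.ext fun j => by
    have hj := DFunLike.congr_fun h (X j)
    simp only [χ, RingHom.toMonoidHom_eq_coe, MonoidHom.coe_coe, RingHom.coe_comp,
      Function.comp_apply, MulSemiringAction.toRingHom_apply, ← algebraMap.smul',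
      perm_smul_eq_rename, rename_X] at hj
    exact X_injective (IsFractionRing.injective _ _ hj)
  exact (linearIndependent_monoidHom _ _).comp χ hχ

end PermAction

/-- The composite Demazure operators `∂_w` (one for each choice of reduced expressions)
are linearly independent over `P_n = ℤ[X_1, …, X_{n+1}]`: if
`∑_w P_w · ∂_w(Q) = 0` for all `Q`, then all `P_w` vanish. -/
theorem demazure_operators_linearly_independent (n : ℕ)
    (D : Fin n → MvPolynomial (Fin (n + 1)) ℤ →ₗ[ℤ] MvPolynomial (Fin (n + 1)) ℤ)
    (hD : ∀ (i : Fin n) (P : MvPolynomial (Fin (n + 1)) ℤ),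
      (X i.succ - X i.castSucc) * D i P =
        P - rename (Equiv.swap i.castSucc i.succ) P)
    (l : Equiv.Perm (Fin (n + 1)) → List (Fin n))
    (hred : ∀ w, ((l w).map (adjTrans n)).prod = w ∧ (l w).length = inversions n w)
    (P : Equiv.Perm (Fin (n + 1)) → MvPolynomial (Fin (n + 1)) ℤ)
    (hP : ∀ Q : MvPolynomial (Fin (n + 1)) ℤ,
      ∑ w : Equiv.Perm (Fin (n + 1)), P w * (l w).foldr (fun i Q' => D i Q') Q = 0) :
    ∀ w, P w = 0 := by
  let φ := algebraMap (MvPolynomial (Fin (n + 1)) ℤ) (FractionRing (MvPolynomial (Fin (n + 1)) ℤ))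
  let α (i : Fin n) := φ (X i.succ - X i.castSucc)
  have hα : ∀ i, α i ≠ 0 := fun i => (map_ne_zero_iff φ (IsFractionRing.injective _ _)).2
    (sub_ne_zero.2 (X_injective.ne Fin.castSucc_lt_succ.ne'))
  have hDφ : ∀ i Q, φ (D i Q) = divDiff (adjTrans n) α i (φ Q) := fun i Q => by
    rw [divDiff, eq_inv_mul_iff_mul_eq₀ (hα i), ← map_mul, hD, map_sub, adjTrans,
      ← perm_smul_eq_rename]
    exact congrArg _ (algebraMap.smul' _ _ _)
  have hcoeff : ∑ w, φ (P w) • divDiffCoeff (adjTrans n) α (l w) = 0 := by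
    refine funext fun u => Fintype.linearIndependent_iff.1 linearIndependent_perm_smul_algebraMap
      _ (funext fun Q => ?_) u
    simp only [Finset.sum_apply, Pi.smul_apply, smul_eq_mul, Pi.zero_apply]
    calc ∑ u, (∑ w, φ (P w) * divDiffCoeff (adjTrans n) α (l w) u) * (u • φ Q)
        = ∑ w, φ (P w) * ∑ u, divDiffCoeff (adjTrans n) α (l w) u * (u • φ Q) := by
          simp only [Finset.sum_mul, Finset.mul_sum, mul_assoc]
          exact Finset.sum_comm
      _ = φ (∑ w, P w * (l w).foldr (fun i Q' => D i Q') Q) := by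
          simp only [← foldr_divDiff_eq_sum, map_sum, map_mul,
            List.foldr_hom φ fun i Q => (hDφ i Q).symm]
      _ = 0 := by rw [hP, map_zero]
  have hli :=
    linearIndependent_divDiffCoeff (inversions_one n) (inversions_adjTrans_mul_le n) hα hred
  exact fun w => IsFractionRing.injective _ (FractionRing _)
    (by simpa using Fintype.linearIndependent_iff.1 hli _ hcoeff w)
end

section
/- Let R be a commutative ring and A an R-algebra that is finitely generated and projective as an R-module. Let M be a progenerator for A, i.e., M is a finitely generated projective A-module and A is a direct summand of M^n as an A-module for some n ≥ 1. Then the canonical map A → End_R(M) sending a to the R-linear endomorphism m ↦ a·m is a split injection of R-modules: it is injective and admits an R-linear retraction. -/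
/-- Let `R` be a commutative ring, `A` an `R`-algebra that is finitely generated
projective as an `R`-module, and `M` a progenerator for `A` (finitely generated
projective as an `A`-module, with `A` a direct summand of some `Mⁿ` as an `A`-module).
Then the canonical `R`-linear map `A → End_R(M)`, `a ↦ (m ↦ a • m)`, is a split
injection of `R`-modules: it is injective and admits an `R`-linear retraction. -/
theorem canonical_map_to_endomorphisms_split_injection
    (R A M : Type*) [CommRing R] [Ring A] [Algebra R A]
    [Module.Finite R A] [Module.Projective R A]
    [AddCommGroup M] [Module A M] [Module R M] [IsScalarTower R A M]
    [Module.Finite A M] [Module.Projective A M]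
    (hsummand : ∃ (n : ℕ) (ι : A →ₗ[A] (Fin n → M)) (π : (Fin n → M) →ₗ[A] A),
      π ∘ₗ ι = LinearMap.id)
    (c : A →ₗ[R] Module.End R M) (hc : ∀ (a : A) (m : M), c a m = a • m) :
    Function.Injective c ∧
    ∃ g : Module.End R M →ₗ[R] A, g ∘ₗ c = LinearMap.id := by
  obtain ⟨n, ι, π, hπι⟩ := hsummand
  have hπR : ∀ (r : R) (v : Fin n → M), π (r • v) = r • π v := by
    intro r v
    have h : r • v = (algebraMap R A r) • v := by
      funext i
      simp [Pi.smul_apply, algebraMap_smul]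
    rw [h, map_smul, Algebra.smul_def, smul_eq_mul]
  have hg : ∃ g : Module.End R M →ₗ[R] A, g ∘ₗ c = LinearMap.id := by
    refine ⟨{ toFun := fun f => π (fun i => f (ι 1 i)),
              map_add' := ?_, map_smul' := ?_ }, ?_⟩
    · intro f g
      show π (fun i => (f + g) (ι 1 i)) = π (fun i => f (ι 1 i)) + π (fun i => g (ι 1 i))
      have h : (fun i => (f + g) (ι 1 i)) =
          (fun i => f (ι 1 i)) + (fun i => g (ι 1 i)) := by
        funext i; simp
      rw [h, map_add]
    · intro r f
      show π (fun i => (r • f) (ι 1 i)) = r • π (fun i => f (ι 1 i))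
      have h : (fun i => (r • f) (ι 1 i)) = r • (fun i => f (ι 1 i)) := by
        funext i; simp
      rw [h, hπR]
    · ext a
      have h1 : (fun i => (c a) (ι 1 i)) = ι a := by
        funext i
        rw [hc]
        have h2 : a • ι 1 = ι a := by rw [← map_smul, smul_eq_mul, mul_one]
        rw [← h2]; rfl
      simp only [LinearMap.coe_comp, Function.comp_apply, LinearMap.coe_mk,
        AddHom.coe_mk, LinearMap.id_coe, id_eq]
      rw [h1]
      simpa using LinearMap.congr_fun hπι a
  obtain ⟨g, hgc⟩ := hg
  refine ⟨fun a b h => ?_, g, hgc⟩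
  have ha := LinearMap.congr_fun hgc a
  have hb := LinearMap.congr_fun hgc b
  simp only [LinearMap.coe_comp, Function.comp_apply, LinearMap.id_coe, id_eq] at ha hb
  rw [← ha, ← hb, h]
end

section
/- Let R be a ring and let M, N, L be R-modules whose underlying sets are finite. Let F^L_{M,N} be the number of submodules N' of L such that N' ≅ N and L/N' ≅ M, and let P^L_{M,N} be the number of short exact sequences 0 → N → L → M → 0, i.e., the number of pairs (f, g) where f : N → L is an injective R-linear map, g : L → M is a surjective R-linear map, and ker(g) = im(f). Then P^L_{M,N} = F^L_{M,N} · |Aut_R(M)| · |Aut_R(N)|, where Aut_R denotes the group of R-module automorphisms. -/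
section aux
variable {R M N L : Type*} [Ring R]
  [AddCommGroup M] [AddCommGroup N] [AddCommGroup L]
  [Module R M] [Module R N] [Module R L]

lemma quot_trans_apply (g : L →ₗ[R] M) (hs : Function.Surjective g)
    (N' : Submodule R L) (h : N' = LinearMap.ker g) (x : L) :
    ((N'.quotEquivOfEq (LinearMap.ker g) h).trans (g.quotKerEquivOfSurjective hs))
      (N'.mkQ x) = g x := by
  subst h
  simp [LinearMap.quotKerEquivOfSurjective, LinearMap.quotKerEquivRange,
    Submodule.quotEquivOfEq]
  rfl

/-- injective maps with given range ↔ isomorphisms onto the submodule -/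
noncomputable def injEquiv (N' : Submodule R L) :
    {f : N →ₗ[R] L // Function.Injective f ∧ LinearMap.range f = N'} ≃
      (N ≃ₗ[R] N') where
  toFun f := (LinearEquiv.ofInjective f.1 f.2.1).trans (LinearEquiv.ofEq _ _ f.2.2)
  invFun e := ⟨N'.subtype.comp e.toLinearMap,
    N'.injective_subtype.comp e.injective,
    by simp [LinearMap.range_comp, Submodule.range_subtype]⟩
  left_inv f := Subtype.ext (LinearMap.ext fun x => rfl)
  right_inv e := by
    refine LinearEquiv.toLinearMap_injective (LinearMap.ext fun x => ?_)
    exact Subtype.ext rfl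

/-- surjective maps with given kernel ↔ isomorphisms from the quotient -/
noncomputable def surjEquiv (N' : Submodule R L) :
    {g : L →ₗ[R] M // Function.Surjective g ∧ LinearMap.ker g = N'} ≃
      ((L ⧸ N') ≃ₗ[R] M) where
  toFun g := (N'.quotEquivOfEq _ g.2.2.symm).trans
    (g.1.quotKerEquivOfSurjective g.2.1)
  invFun q := ⟨q.toLinearMap.comp N'.mkQ,
    q.surjective.comp (Submodule.mkQ_surjective N'),
    by ext x
       simp [LinearMap.mem_ker, LinearEquiv.map_eq_zero_iff,
         Submodule.Quotient.mk_eq_zero]⟩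
  left_inv g := Subtype.ext (LinearMap.ext fun x => quot_trans_apply g.1 g.2.1 N' g.2.2.symm x)
  right_inv q := by
    refine LinearEquiv.toLinearMap_injective (LinearMap.ext fun x => ?_)
    obtain ⟨y, rfl⟩ := Submodule.mkQ_surjective N' x
    exact quot_trans_apply _ _ N' _ y

/-- splitting the fiber -/
def fiberSplit (N' : Submodule R L) :
    {x : {fg : (N →ₗ[R] L) × (L →ₗ[R] M) //
        Function.Injective fg.1 ∧ Function.Surjective fg.2 ∧
        LinearMap.ker fg.2 = LinearMap.range fg.1} //
      LinearMap.range x.1.1 = N'} ≃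
    {f : N →ₗ[R] L // Function.Injective f ∧ LinearMap.range f = N'} ×
    {g : L →ₗ[R] M // Function.Surjective g ∧ LinearMap.ker g = N'} where
  toFun _x := (⟨_x.1.1.1, _x.1.2.1, _x.2⟩, ⟨_x.1.1.2, _x.1.2.2.1, _x.1.2.2.2.trans _x.2⟩)
  invFun _p := ⟨⟨(_p.1.1, _p.2.1), _p.1.2.1, _p.2.2.1, _p.2.2.2.trans _p.1.2.2.symm⟩, _p.1.2.2⟩
  left_inv x := rfl
  right_inv p := rfl

end aux

section aux2
variable {R M N L : Type*} [Ring R]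
  [AddCommGroup M] [AddCommGroup N] [AddCommGroup L]
  [Module R M] [Module R N] [Module R L]

lemma card_linearEquiv_left (h : Nonempty (M ≃ₗ[R] N)) :
    Nat.card (M ≃ₗ[R] N) = Nat.card (N ≃ₗ[R] N) := by
  obtain ⟨i⟩ := h
  exact Nat.card_congr ⟨fun e => i.symm.trans e, fun f => i.trans f,
    fun e => by ext x; simp, fun f => by ext x; simp⟩

lemma card_linearEquiv_right (h : Nonempty (M ≃ₗ[R] N)) :
    Nat.card (M ≃ₗ[R] N) = Nat.card (M ≃ₗ[R] M) := by
  obtain ⟨i⟩ := h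
  exact Nat.card_congr ⟨fun e => e.trans i.symm, fun f => f.trans i,
    fun e => by ext x; simp, fun f => by ext x; simp⟩

lemma nat_card_sigma {ι : Type*} [Fintype ι] (f : ι → Type*) [∀ i, Finite (f i)] :
    Nat.card (Σ i, f i) = ∑ i, Nat.card (f i) := by
  letI := fun i => Fintype.ofFinite (f i)
  simp [Nat.card_eq_fintype_card, Fintype.card_sigma]

end aux2

/-- Let `R` be a ring and `M`, `N`, `L` finite `R`-modules.  The number of short exact
sequences `0 → N → L → M → 0` (pairs of an injective map `N → L` and a surjective map
`L → M` with kernel equal to the image) equals `F^L_{M,N} · |Aut(M)| · |Aut(N)|`, where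
`F^L_{M,N}` is the number of submodules `N' ≤ L` with `N' ≅ N` and `L/N' ≅ M`. -/
theorem card_short_exact_sequences
    (R : Type*) [Ring R] (M N L : Type*)
    [AddCommGroup M] [AddCommGroup N] [AddCommGroup L]
    [Module R M] [Module R N] [Module R L]
    [Finite M] [Finite N] [Finite L] :
    Nat.card {fg : (N →ₗ[R] L) × (L →ₗ[R] M) //
        Function.Injective fg.1 ∧ Function.Surjective fg.2 ∧
        LinearMap.ker fg.2 = LinearMap.range fg.1} =
    Nat.card {N' : Submodule R L //
        Nonempty (N' ≃ₗ[R] N) ∧ Nonempty ((L ⧸ N') ≃ₗ[R] M)} *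
    Nat.card (M ≃ₗ[R] M) * Nat.card (N ≃ₗ[R] N) := by
  classical
  haveI : Finite (N →ₗ[R] L) := Finite.of_injective _ (DFunLike.coe_injective)
  haveI : Finite (L →ₗ[R] M) := Finite.of_injective _ (DFunLike.coe_injective)
  haveI : Fintype (Submodule R L) := Fintype.ofFinite _
  set cM := Nat.card (M ≃ₗ[R] M)
  set cN := Nat.card (N ≃ₗ[R] N)
  haveI : ∀ N' : Submodule R L, Finite
      {x : {fg : (N →ₗ[R] L) × (L →ₗ[R] M) //
        Function.Injective fg.1 ∧ Function.Surjective fg.2 ∧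
        LinearMap.ker fg.2 = LinearMap.range fg.1} //
      LinearMap.range x.1.1 = N'} := fun N' => inferInstance
  calc Nat.card {fg : (N →ₗ[R] L) × (L →ₗ[R] M) //
        Function.Injective fg.1 ∧ Function.Surjective fg.2 ∧
        LinearMap.ker fg.2 = LinearMap.range fg.1}
      = Nat.card (Σ N' : Submodule R L, {x : {fg : (N →ₗ[R] L) × (L →ₗ[R] M) //
          Function.Injective fg.1 ∧ Function.Surjective fg.2 ∧
          LinearMap.ker fg.2 = LinearMap.range fg.1} //
          LinearMap.range x.1.1 = N'}) :=
        (Nat.card_congr (Equiv.sigmaFiberEquiv _)).symm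
    _ = ∑ N' : Submodule R L, Nat.card ((N ≃ₗ[R] N') × ((L ⧸ N') ≃ₗ[R] M)) := by
        rw [nat_card_sigma]
        refine Finset.sum_congr rfl fun N' _ => ?_
        exact Nat.card_congr ((fiberSplit N').trans
          ((injEquiv N').prodCongr (surjEquiv N')))
    _ = ∑ N' : Submodule R L,
          (if Nonempty (N' ≃ₗ[R] N) ∧ Nonempty ((L ⧸ N') ≃ₗ[R] M)
            then cM * cN else 0) := by
        refine Finset.sum_congr rfl fun N' _ => ?_
        rw [Nat.card_prod]
        by_cases h1 : Nonempty ((N' : Type _) ≃ₗ[R] N)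
        · by_cases h2 : Nonempty ((L ⧸ N') ≃ₗ[R] M)
          · rw [if_pos ⟨h1, h2⟩, card_linearEquiv_right ⟨h1.some.symm⟩,
              card_linearEquiv_left h2, mul_comm]
          · haveI : IsEmpty ((L ⧸ N') ≃ₗ[R] M) := ⟨fun e => h2 ⟨e⟩⟩
            rw [if_neg (by tauto),
              Nat.card_of_isEmpty (α := (L ⧸ N') ≃ₗ[R] M), mul_zero]
        · haveI : IsEmpty (N ≃ₗ[R] N') := ⟨fun e => h1 ⟨e.symm⟩⟩
          rw [if_neg (by tauto),
            Nat.card_of_isEmpty (α := N ≃ₗ[R] N'), zero_mul]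
    _ = (Finset.univ.filter fun N' : Submodule R L =>
          Nonempty (N' ≃ₗ[R] N) ∧ Nonempty ((L ⧸ N') ≃ₗ[R] M)).card * (cM * cN) := by
        rw [Finset.sum_ite, Finset.sum_const, Finset.sum_const_zero, add_zero,
          smul_eq_mul]
    _ = Nat.card {N' : Submodule R L //
          Nonempty (N' ≃ₗ[R] N) ∧ Nonempty ((L ⧸ N') ≃ₗ[R] M)} * cM * cN := by
        rw [Nat.card_eq_fintype_card, Fintype.card_subtype, mul_assoc]
end
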